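/- Let (a_n)_{n≥1} be a strong divisibility sequence in a GCD domain R. If n ≥ 2 has prime factorization n = p_1^{α_1} ⋯ p_s^{α_s} with distinct primes p_i, then lcm(a_1,...,a_n)/lcm(a_1,...,a_{n-1}) is associated to a_n / lcm(a_{n/p_1}, a_{n/p_2}, ..., a_{n/p_s}). -/

import Mathlib

/-!
Write `L = lcm(a₁, …, aₙ₋₁)`. Then `lcm(a₁, …, aₙ) = lcm(L, aₙ)` and `lcm(L, aₙ) · gcd(L, aₙ) ∼ L · aₙ`,
so it suffices to show `gcd(L, aₙ) ∼ lcm_{p ∣ n} a_{n/p}`. Since gcd distributes over lcm in a GCD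
domain, `gcd(L, aₙ)` divides `lcm_{m < n} gcd(aₘ, aₙ) ∼ lcm_{m < n} a_{gcd(m,n)}`; each `gcd(m, n)` is
a proper divisor of `n`, hence divides some `n/p`, and then `a_{gcd(m,n)} ∣ a_{n/p}`. Conversely each
`n/p` is an index below `n` dividing `n`, so `a_{n/p}` divides both `L` and `aₙ`.
-/

/-- `iterLcm a n` is an lcm of `a 1, a 2, …, a n` (with `iterLcm a 0 = 1`). -/
noncomputable def iterLcm {R : Type*} [CommRing R] [IsDomain R] [GCDMonoid R]
    (a : ℕ → R) : ℕ → R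
  | 0 => 1
  | n + 1 => lcm (iterLcm a n) (a (n + 1))

/-- An lcm of a list of elements of a GCD domain. -/
noncomputable def listLcm {R : Type*} [CommRing R] [IsDomain R] [GCDMonoid R] :
    List R → R
  | [] => 1
  | x :: xs => lcm x (listLcm xs)

theorem gcd_lcm_dvd_lcm_gcd {α : Type*} [CommMonoidWithZero α] [GCDMonoid α] (x y z : α) :
    gcd (lcm x y) z ∣ lcm (gcd x z) (gcd y z) := by
  rcases eq_or_ne z 0 with rfl | hz
  · exact (gcd_zero_right' _).dvd.trans
      (lcm_dvd_lcm (gcd_zero_right' x).symm.dvd (gcd_zero_right' y).symm.dvd)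
  -- `c * d ∣ gcd x z * gcd y z ∼ c * lcm (gcd x z) (gcd y z)`, then cancel `c`.
  set d := gcd (lcm x y) z
  set c := gcd (gcd x z) (gcd y z)
  have hc : c ≠ 0 := fun h => hz ((gcd_eq_zero_iff _ _).mp ((gcd_eq_zero_iff _ _).mp h).2).2
  have hcx : c ∣ x := (gcd_dvd_left _ _).trans (gcd_dvd_left _ _)
  have hcy : c ∣ y := (gcd_dvd_right _ _).trans (gcd_dvd_left _ _)
  have hcz : c ∣ z := (gcd_dvd_left _ _).trans (gcd_dvd_right _ _)
  have hdz : d ∣ z := gcd_dvd_right _ _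
  have hxy : c * d ∣ x * y :=
    (mul_dvd_mul (dvd_gcd hcx hcy) (gcd_dvd_left _ _)).trans (gcd_mul_lcm x y).dvd
  have hzy : c * d ∣ z * y := mul_comm y z ▸ mul_dvd_mul hcy hdz
  have hxz_y : c * d ∣ gcd x z * y := (dvd_gcd hxy hzy).trans (gcd_mul_right' y x z).dvd
  have hxz_z : c * d ∣ gcd x z * z :=
    (dvd_gcd (mul_dvd_mul hcx hdz) (mul_dvd_mul hcz hdz)).trans (gcd_mul_right' z x z).dvd
  have hprod : c * d ∣ gcd x z * gcd y z :=
    (dvd_gcd hxz_y hxz_z).trans (gcd_mul_left' _ y z).dvd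
  exact (mul_dvd_mul_iff_left hc).mp (hprod.trans (gcd_mul_lcm _ _).symm.dvd)

theorem Nat.exists_mem_primeFactors_dvd_div {d n : ℕ} (hn : n ≠ 0) (hdn : d ∣ n) (hd : d ≠ n) :
    ∃ p ∈ n.primeFactors, d ∣ n / p := by
  obtain ⟨k, rfl⟩ := hdn
  have hk : k ≠ 1 := by rintro rfl; simp at hd
  obtain ⟨p, hp, hpk⟩ := Nat.exists_prime_and_dvd hk
  refine ⟨p, Nat.mem_primeFactors.mpr ⟨hp, hpk.mul_left d, hn⟩, ?_⟩
  rw [Nat.mul_div_assoc d hpk]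
  exact Nat.dvd_mul_right d _

section Lcm

variable {R : Type*} [CommRing R] [IsDomain R] [GCDMonoid R]

theorem listLcm_dvd_iff {l : List R} {z : R} : listLcm l ∣ z ↔ ∀ x ∈ l, x ∣ z := by
  induction l with
  | nil => simp [listLcm]
  | cons x l ih => simp [listLcm, lcm_dvd_iff, ih]

theorem dvd_listLcm {l : List R} {x : R} (hx : x ∈ l) : x ∣ listLcm l :=
  listLcm_dvd_iff.mp dvd_rfl x hx

theorem iterLcm_dvd_iff {a : ℕ → R} {k : ℕ} {z : R} :
    iterLcm a k ∣ z ↔ ∀ m ∈ Finset.Icc 1 k, a m ∣ z := by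
  induction k with
  | zero => simp [iterLcm]
  | succ k ih =>
    rw [iterLcm, lcm_dvd_iff, ih, ← Finset.insert_Icc_right_eq_Icc_add_one (by omega),
      Finset.forall_mem_insert, and_comm]

theorem dvd_iterLcm {a : ℕ → R} {k m : ℕ} (hm : m ∈ Finset.Icc 1 k) : a m ∣ iterLcm a k :=
  iterLcm_dvd_iff.mp dvd_rfl m hm

theorem gcd_iterLcm_dvd_iterLcm_gcd (a : ℕ → R) (z : R) (k : ℕ) :
    gcd (iterLcm a k) z ∣ iterLcm (fun m => gcd (a m) z) k := by
  induction k with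
  | zero => exact gcd_dvd_left 1 z
  | succ k ih => exact (gcd_lcm_dvd_lcm_gcd _ _ z).trans (lcm_dvd_lcm ih dvd_rfl)

theorem iterLcm_mul_gcd_associated (a : ℕ → R) (k : ℕ) :
    Associated (iterLcm a (k + 1) * gcd (iterLcm a k) (a (k + 1))) (iterLcm a k * a (k + 1)) := by
  rw [mul_comm]
  exact gcd_mul_lcm _ _

end Lcm

def IsStrongDivisibilitySequence {α : Type*} [CommMonoidWithZero α] [GCDMonoid α] (a : ℕ → α) :
    Prop :=
  ∀ m n, 1 ≤ m → 1 ≤ n → Associated (gcd (a m) (a n)) (a (Nat.gcd m n))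

namespace IsStrongDivisibilitySequence

theorem dvd_of_dvd {α : Type*} [CommMonoidWithZero α] [GCDMonoid α] {a : ℕ → α}
    (ha : IsStrongDivisibilitySequence a) {d k : ℕ} (hk : k ≠ 0) (hdk : d ∣ k) : a d ∣ a k := by
  have hd : 1 ≤ d := Nat.pos_of_dvd_of_pos hdk (Nat.pos_of_ne_zero hk)
  have := ha d k hd (Nat.pos_of_ne_zero hk)
  rw [Nat.gcd_eq_left hdk] at this
  exact this.symm.dvd.trans (gcd_dvd_right _ _)

variable {R : Type*} [CommRing R] [IsDomain R] [GCDMonoid R] {a : ℕ → R}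

theorem listLcm_dvd_gcd_iterLcm (ha : IsStrongDivisibilitySequence a) {n : ℕ} (hn : n ≠ 0) :
    listLcm (n.primeFactors.toList.map fun p => a (n / p)) ∣ gcd (iterLcm a (n - 1)) (a n) := by
  simp only [listLcm_dvd_iff, List.mem_map, Finset.mem_toList, forall_exists_index, and_imp]
  rintro _ p hp rfl
  have hpn : p ∣ n := Nat.dvd_of_mem_primeFactors hp
  have hp1 : 1 < p := (Nat.prime_of_mem_primeFactors hp).one_lt
  have hquot : n / p ∈ Finset.Icc 1 (n - 1) := by
    have := Nat.div_lt_self (Nat.pos_of_ne_zero hn) hp1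
    have := Nat.div_pos (Nat.le_of_dvd (Nat.pos_of_ne_zero hn) hpn) (by omega)
    simp only [Finset.mem_Icc]
    omega
  exact dvd_gcd (dvd_iterLcm hquot) (ha.dvd_of_dvd hn (Nat.div_dvd_of_dvd hpn))

theorem gcd_iterLcm_dvd_listLcm (ha : IsStrongDivisibilitySequence a) {n : ℕ} (hn : n ≠ 0) :
    gcd (iterLcm a (n - 1)) (a n) ∣ listLcm (n.primeFactors.toList.map fun p => a (n / p)) := by
  refine (gcd_iterLcm_dvd_iterLcm_gcd a (a n) (n - 1)).trans (iterLcm_dvd_iff.mpr ?_)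
  intro m hm
  rw [Finset.mem_Icc] at hm
  have hgcd : Nat.gcd m n ≠ n := fun h =>
    absurd (Nat.le_of_dvd (by omega) (h ▸ Nat.gcd_dvd_left m n)) (by omega)
  obtain ⟨p, hp, hdvd⟩ :=
    Nat.exists_mem_primeFactors_dvd_div hn (Nat.gcd_dvd_right m n) hgcd
  have hpn : n / p ≠ 0 :=
    (Nat.div_pos (Nat.le_of_mem_primeFactors hp) (Nat.prime_of_mem_primeFactors hp).pos).ne'
  calc gcd (a m) (a n) ∣ a (Nat.gcd m n) := (ha m n hm.1 (by omega)).dvd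
    _ ∣ a (n / p) := ha.dvd_of_dvd hpn hdvd
    _ ∣ _ := dvd_listLcm (List.mem_map.mpr ⟨p, Finset.mem_toList.mpr hp, rfl⟩)

end IsStrongDivisibilitySequence

theorem lcm_quotient_eq_div_lcm_of_prime_quotients_general
    {R : Type*} [CommRing R] [IsDomain R] [GCDMonoid R]
    (a : ℕ → R)
    (hsd : ∀ m n, 1 ≤ m → 1 ≤ n → Associated (gcd (a m) (a n)) (a (Nat.gcd m n)))
    (n : ℕ) (hn : 2 ≤ n) :
    Associated
      (iterLcm a n * listLcm (n.primeFactors.toList.map (fun p => a (n / p))))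
      (iterLcm a (n - 1) * a n) := by
  have hseq : IsStrongDivisibilitySequence a := hsd
  have hn0 : n ≠ 0 := by omega
  have hgcd : Associated (gcd (iterLcm a (n - 1)) (a n))
      (listLcm (n.primeFactors.toList.map fun p => a (n / p))) :=
    associated_of_dvd_dvd (hseq.gcd_iterLcm_dvd_listLcm hn0) (hseq.listLcm_dvd_gcd_iterLcm hn0)
  obtain ⟨k, rfl⟩ : ∃ k, n = k + 1 := ⟨n - 1, by omega⟩
  exact (hgcd.symm.mul_left _).trans (iterLcm_mul_gcd_associated a k)

/-- For a strong divisibility sequence `(a n)` and `n ≥ 2` with prime divisors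
`p₁, …, p_s`, the quotient `lcm(a 1,…,a n)/lcm(a 1,…,a (n-1))` is associated to
`a n / lcm(a (n/p₁), …, a (n/p_s))`; equivalently (cross-multiplying),
`lcm(a 1,…,a n) * lcm(a (n/p₁), …, a (n/p_s))` is associated to
`lcm(a 1,…,a (n-1)) * a n`. -/
theorem lcm_quotient_eq_div_lcm_of_prime_quotients
    {R : Type*} [CommRing R] [IsDomain R] [GCDMonoid R]
    (a : ℕ → R) (ha : ∀ n, 1 ≤ n → a n ≠ 0)
    (hsd : ∀ m n, 1 ≤ m → 1 ≤ n → Associated (gcd (a m) (a n)) (a (Nat.gcd m n)))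
    (n : ℕ) (hn : 2 ≤ n) :
    Associated
      (iterLcm a n * listLcm (n.primeFactors.toList.map (fun p => a (n / p))))
      (iterLcm a (n - 1) * a n) :=
  lcm_quotient_eq_div_lcm_of_prime_quotients_general a hsd n hn
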